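/- Let (R,m) be a Noetherian local ring and C a finitely generated R-module. Then the set of attached primes of the Artinian module Hom_R(C, E(R/m)) equals the set of associated primes of C: Att_R(Hom_R(C,E(R/m))) = Ass_R(C). -/

import Mathlib

open CategoryTheory CategoryTheory.Limits Opposite

noncomputable section

namespace GLC

variable {R : Type} [CommRing R]
/-- The inverse system of quotients `M/a^n M`, `n : ℕ`, with the canonical
projections `M/a^{n+1}M → M/a^n M`. -/
def quotPowersDiagram (a : Ideal R) (M : ModuleCat.{0} R) : ℕᵒᵖ ⥤ ModuleCat.{0} R :=
  Functor.ofOpSequence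
    (X := fun n => ModuleCat.of R (M ⧸ (a ^ n • ⊤ : Submodule R M)))
    (fun n => ModuleCat.ofHom (Submodule.mapQ _ _ LinearMap.id
      (Submodule.smul_mono (Ideal.pow_le_pow_right (Nat.le_succ n)) le_rfl)))

/-- The diagram `n ↦ Ext^i(M/a^n M, -)` whose colimit is generalized local cohomology. -/
def diagram (a : Ideal R) (M : ModuleCat.{0} R) (i : ℕ) :
    ℕᵒᵖᵒᵖ ⥤ ModuleCat.{0} R ⥤ ModuleCat.{0} R :=
  (quotPowersDiagram a M).op ⋙ Ext R (ModuleCat.{0} R) i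

/-- The generalized local cohomology functor `H^i_a(M, -)`,
`N ↦ colim_n Ext^i(M/a^n M, N)`. -/
def glcFunctor (a : Ideal R) (i : ℕ) (M : ModuleCat.{0} R) :
    ModuleCat.{0} R ⥤ ModuleCat.{0} R :=
  colimit (diagram a M i)

/-- Generalized local cohomology `H^i_a(M,N) = colim_n Ext^i(M/a^nM, N)`. -/
def glc (a : Ideal R) (i : ℕ) (M N : ModuleCat.{0} R) : ModuleCat.{0} R :=
  (glcFunctor a i M).obj N


/-- The `a`-torsion submodule `Γ_a(X) = {x : aⁿ x = 0 for some n}`. -/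
def torsionSubmodule (a : Ideal R) (X : Type) [AddCommGroup X] [Module R X] :
    Submodule R X where
  carrier := {x | ∃ n : ℕ, ∀ r ∈ a ^ n, r • x = 0}
  zero_mem' := ⟨0, fun r _ => smul_zero r⟩
  add_mem' := by
    rintro x y ⟨n, hn⟩ ⟨m, hm⟩
    exact ⟨max n m, fun r hr => by
      rw [smul_add, hn r (Ideal.pow_le_pow_right (le_max_left n m) hr),
        hm r (Ideal.pow_le_pow_right (le_max_right n m) hr), add_zero]⟩
  smul_mem' := by
    rintro c x ⟨n, hn⟩
    exact ⟨n, fun r hr => by rw [smul_comm, hn r hr, smul_zero]⟩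

/-- The `a`-torsion functor `Γ_a`. -/
def torsionFunctor (a : Ideal R) : ModuleCat.{0} R ⥤ ModuleCat.{0} R where
  obj X := ModuleCat.of R (torsionSubmodule a X)
  map f := ModuleCat.ofHom (f.hom.restrict (by
    rintro x ⟨n, hn⟩
    exact ⟨n, fun r hr => by rw [← map_smul, hn r hr, map_zero]⟩))
  map_id _ := by ext x; rfl
  map_comp _ _ := by ext x; rfl

instance (a : Ideal R) : (torsionFunctor (R := R) a).Additive where
  map_add := by intros; ext x; rfl


/-- `pd M ≤ n`, expressed via vanishing of `Ext^i(M,-)` for `i > n`. -/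
def pdLE (M : ModuleCat.{0} R) (n : ℕ) : Prop :=
  ∀ i : ℕ, n < i → ∀ N : ModuleCat.{0} R,
    Subsingleton (((Ext R (ModuleCat.{0} R) i).obj (op M)).obj N)

/-- The projective dimension of `M`, as an element of `ℕ∞`. -/
def projDim (M : ModuleCat.{0} R) : ℕ∞ := sInf ((↑) '' {n : ℕ | pdLE M n})

/-- `injdim R ≤ n` (as a module over itself), via vanishing of `Ext^i(-,R)` for `i > n`. -/
def injDimRingLE (R : Type) [CommRing R] (n : ℕ) : Prop :=
  ∀ i : ℕ, n < i → ∀ N : ModuleCat.{0} R,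
    Subsingleton (((Ext R (ModuleCat.{0} R) i).obj (op N)).obj (ModuleCat.of R R))

/-- A Gorenstein local ring: Noetherian local with finite self-injective dimension. -/
def IsGorensteinLocalRing (R : Type) [CommRing R] : Prop :=
  IsNoetherianRing R ∧ IsLocalRing R ∧ ∃ n : ℕ, injDimRingLE R n

/-- Krull dimension of a module, i.e. of `R` modulo its annihilator. -/
def moduleDim (R : Type) [CommRing R] (N : Type) [AddCommGroup N] [Module R N] :
    WithBot ℕ∞ :=
  ringKrullDim (R ⧸ Module.annihilator R N)

/-- Depth of a module over a local ring, as the least `i` with `Ext^i(R/m, N) ≠ 0`. -/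
def moduleDepth (R : Type) [CommRing R] [IsLocalRing R] (N : ModuleCat.{0} R) : ℕ∞ :=
  sInf ((↑) '' {i : ℕ | ¬ Subsingleton
    (((Ext R (ModuleCat.{0} R) i).obj
      (op (ModuleCat.of R (R ⧸ IsLocalRing.maximalIdeal R)))).obj N)})

/-- `S` is a `p`-secondary submodule: nonzero, every `r : R` acts on `S` either
surjectively or nilpotently, and `p` is the radical of the annihilator of `S`. -/
def IsSecondaryWith {M : Type} [AddCommGroup M] [Module R M]
    (S : Submodule R M) (p : Ideal R) : Prop :=
  S ≠ ⊥ ∧ S.annihilator.radical = p ∧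
    ∀ r : R, (∀ x ∈ S, ∃ y ∈ S, r • y = x) ∨ r ∈ S.annihilator.radical

/-- The attached primes of a module: the primes occurring in some minimal secondary
representation. -/
def attachedPrimes (R M : Type) [CommRing R] [AddCommGroup M] [Module R M] :
    Set (Ideal R) :=
  { q | ∃ (n : ℕ) (S : Fin n → Submodule R M) (p : Fin n → Ideal R),
      (⨆ i, S i) = ⊤ ∧ (∀ i, IsSecondaryWith (S i) (p i)) ∧ Function.Injective p ∧
      (∀ i : Fin n, (⨆ j ∈ ({i}ᶜ : Set (Fin n)), S j) ≠ ⊤) ∧ ∃ i, p i = q }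

/-- `E` is an injective hull of the residue field `R/m`: it is injective and is an
essential extension of (a copy of) `R/m`. -/
def IsResidueFieldInjectiveHull (R : Type) [CommRing R] [IsLocalRing R]
    (E : Type) [AddCommGroup E] [Module R E] : Prop :=
  Module.Injective R E ∧ ∃ ι : (R ⧸ IsLocalRing.maximalIdeal R) →ₗ[R] E,
    Function.Injective ι ∧ ∀ S : Submodule R E, S ≠ ⊥ → LinearMap.range ι ⊓ S ≠ ⊥

/-- The submodule `(0 :_A J)` of elements annihilated by the ideal `J`. -/
def annIn (J : Ideal R) (A : Type) [AddCommGroup A] [Module R A] : Submodule R A where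
  carrier := {x | ∀ r ∈ J, r • x = 0}
  zero_mem' := fun r _ => smul_zero r
  add_mem' := fun hx hy r hr => by rw [smul_add, hx r hr, hy r hr, add_zero]
  smul_mem' := fun c x hx r hr => by rw [smul_comm, hx r hr, smul_zero]

/-- A regular local ring: Noetherian local whose maximal ideal is generated by
`dim R` elements. -/
def IsRegularLocalRing (R : Type) [CommRing R] : Prop :=
  IsNoetherianRing R ∧ ∃ _ : IsLocalRing R, ∃ s : Finset R,
    Ideal.span (s : Set R) = IsLocalRing.maximalIdeal R ∧
    (s.card : WithBot ℕ∞) = ringKrullDim R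

end GLC

open GLC IsLocalRing

/-
By Lasker–Noether, `0 = Q₁ ∩ ⋯ ∩ Qₙ` is a minimal primary decomposition in `C`, and the primes
`pᵢ = √(Qᵢ : C)` are exactly the associated primes of `C`. Dualising into `E`, `Hom(C, E)` is the
sum of the submodules `Hom(C/Qᵢ, E)` (because `E` is injective and `C` embeds in `∏ C/Qᵢ`), and the
sum is irredundant because `E` cogenerates and `⋂_{j ≠ i} Qⱼ ≠ 0`. Each summand is `pᵢ`-secondary:
elements of `pᵢ` are nilpotent on `C/Qᵢ`, and any other element acts injectively on `C/Qᵢ`, hence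
surjectively on `Hom(C/Qᵢ, E)`. Finally, the primes of a minimal secondary representation are
exactly the `q` for which the module has a `q`-secondary quotient, so they do not depend on the
representation.
-/

open Submodule

section Secondary

variable {R A : Type} [CommRing R] [AddCommGroup A] [Module R A]

theorem Submodule.notMem_radical_annihilator_of_surjective {S : Submodule R A} (hS : S ≠ ⊥)
    {r : R} (hr : ∀ x ∈ S, ∃ y ∈ S, r • y = x) : r ∉ S.annihilator.radical := by
  rintro ⟨k, hk⟩
  have hpow : ∀ n : ℕ, ∀ x ∈ S, ∃ y ∈ S, r ^ n • y = x := by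
    intro n
    induction n with
    | zero => exact fun x hx => ⟨x, hx, by rw [pow_zero, one_smul]⟩
    | succ n ih =>
      intro x hx
      obtain ⟨y, hy, rfl⟩ := ih x hx
      obtain ⟨z, hz, rfl⟩ := hr y hy
      exact ⟨z, hz, by rw [pow_succ, mul_smul]⟩
  refine hS (eq_bot_iff.mpr fun x hx => ?_)
  obtain ⟨y, hy, rfl⟩ := hpow k x hx
  rw [mem_annihilator.mp hk y hy]
  exact zero_mem _

theorem GLC.IsSecondaryWith.of_le_radical {S : Submodule R A} {p : Ideal R} (hS : S ≠ ⊥)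
    (hnil : p ≤ S.annihilator.radical) (hsurj : ∀ r ∉ p, ∀ x ∈ S, ∃ y ∈ S, r • y = x) :
    IsSecondaryWith S p := by
  have hrad : S.annihilator.radical = p :=
    le_antisymm (fun r hr => by_contra fun hrp =>
      notMem_radical_annihilator_of_surjective hS (hsurj r hrp) hr) hnil
  refine ⟨hS, hrad, fun r => ?_⟩
  by_cases hr : r ∈ p
  · exact .inr (hrad ▸ hr)
  · exact .inl (hsurj r hr)

theorem GLC.IsSecondaryWith.map {W : Type} [AddCommGroup W] [Module R W] {S : Submodule R A}
    {p : Ideal R} (h : IsSecondaryWith S p) (g : A →ₗ[R] W) (hg : S.map g ≠ ⊥) :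
    IsSecondaryWith (S.map g) p := by
  obtain ⟨-, hrad, hdich⟩ := h
  have hann : S.annihilator ≤ (S.map g).annihilator := by
    intro r hr
    rw [mem_annihilator] at hr ⊢
    rintro _ ⟨x, hx, rfl⟩
    rw [← map_smul, hr x hx, map_zero]
  refine .of_le_radical hg (hrad ▸ Ideal.radical_mono hann) fun r hr => ?_
  rintro _ ⟨x, hx, rfl⟩
  obtain ⟨y, hy, rfl⟩ := (hdich r).resolve_right (hrad ▸ hr) x hx
  exact ⟨g y, mem_map_of_mem hy, (map_smul g r y).symm⟩

theorem GLC.IsSecondaryWith.top_quotient {S B : Submodule R A} {p : Ideal R}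
    (h : IsSecondaryWith S p) (hB : B ≠ ⊤) (hSB : B ⊔ S = ⊤) :
    IsSecondaryWith (⊤ : Submodule R (A ⧸ B)) p := by
  have hmap : S.map B.mkQ = ⊤ := (map_mkQ_eq_top B S).mpr hSB
  have : Nontrivial (A ⧸ B) := Quotient.nontrivial_iff.mpr hB
  exact hmap ▸ h.map B.mkQ (hmap ▸ top_ne_bot)

theorem Submodule.exists_ne_top_sup_eq_top_of_iSup_eq_top {ι : Type*} [Finite ι]
    {T : ι → Submodule R A} (hA : (⊤ : Submodule R A) ≠ ⊥) (hT : ⨆ i, T i = ⊤) :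
    ∃ i, ∃ B : Submodule R A, B ≠ ⊤ ∧ B ⊔ T i = ⊤ := by
  classical
  have := Fintype.ofFinite ι
  suffices ∀ s : Finset ι, ⨆ i ∈ s, T i = ⊤ → ∃ i, ∃ B : Submodule R A, B ≠ ⊤ ∧ B ⊔ T i = ⊤ from
    this Finset.univ (by simpa using hT)
  intro s
  induction s using Finset.induction_on with
  | empty => exact fun h => absurd (by simpa using h.symm) hA
  | insert a s _ ih =>
    rw [Finset.iSup_insert]
    intro h
    by_cases hs : ⨆ i ∈ s, T i = ⊤
    · exact ih hs
    · exact ⟨a, _, hs, sup_comm (T a) _ ▸ h⟩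

theorem GLC.IsSecondaryWith.exists_eq_of_iSup_eq_top {ι : Type*} [Finite ι]
    {S : ι → Submodule R A} {p : ι → Ideal R} (hS : ⨆ i, S i = ⊤)
    (hsec : ∀ i, IsSecondaryWith (S i) (p i)) {B : Submodule R A} {q : Ideal R}
    (hq : IsSecondaryWith (⊤ : Submodule R (A ⧸ B)) q) : ∃ i, p i = q := by
  have hT : ⨆ i, (S i).map B.mkQ = ⊤ := by
    rw [← Submodule.map_iSup, hS, Submodule.map_top, range_mkQ]
  -- some `S i` maps onto a nonzero quotient of `A ⧸ B`, which is then both `p i`- and `q`-secondary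
  obtain ⟨i, B', hB', hi⟩ := exists_ne_top_sup_eq_top_of_iSup_eq_top hq.1 hT
  have hi0 : (S i).map B.mkQ ≠ ⊥ := fun h => hB' (by simpa [h] using hi)
  exact ⟨i, (((hsec i).map B.mkQ hi0).top_quotient hB' hi).2.1.symm.trans
    (hq.top_quotient hB' (sup_top_eq B')).2.1⟩

theorem attachedPrimes_eq_range {ι : Type*} [Finite ι] {S : ι → Submodule R A} {p : ι → Ideal R}
    (hS : ⨆ i, S i = ⊤) (hsec : ∀ i, IsSecondaryWith (S i) (p i)) (hp : Function.Injective p)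
    (hirr : ∀ i, ⨆ j ∈ ({i}ᶜ : Set ι), S j ≠ ⊤) :
    attachedPrimes R A = Set.range p := by
  refine Set.Subset.antisymm ?_ ?_
  · rintro q ⟨n, T, r, hT, hTsec, -, hTirr, j, rfl⟩
    have hsplit : (⨆ k ∈ ({j}ᶜ : Set (Fin n)), T k) ⊔ T j = ⊤ := by
      rw [sup_comm, ← hT]
      exact (iSup_split_single T j).symm
    exact IsSecondaryWith.exists_eq_of_iSup_eq_top hS hsec
      ((hTsec j).top_quotient (hTirr j) hsplit)
  · rintro _ ⟨i, rfl⟩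
    obtain ⟨n, ⟨e⟩⟩ := Finite.exists_equiv_fin ι
    refine ⟨n, S ∘ e.symm, p ∘ e.symm, e.symm.iSup_comp.trans hS, fun k => hsec _,
      hp.comp e.symm.injective, fun k => ne_top_of_le_ne_top (hirr (e.symm k)) ?_, e i, by simp⟩
    exact iSup₂_le fun j hj => le_iSup₂_of_le (f := fun j (_ : j ∈ ({e.symm k}ᶜ : Set ι)) => S j)
      (e.symm j) (e.symm.injective.ne hj) le_rfl

end Secondary

theorem GLC.IsResidueFieldInjectiveHull.exists_apply_ne_zero {R E : Type} [CommRing R]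
    [IsLocalRing R] [AddCommGroup E] [Module R E] (hE : IsResidueFieldInjectiveHull R E)
    {M : Type} [AddCommGroup M] [Module R M] {x : M} (hx : x ≠ 0) :
    ∃ f : M →ₗ[R] E, f x ≠ 0 := by
  obtain ⟨hinj, ι, hι, -⟩ := hE
  have hle : Ideal.torsionOf R M x ≤ maximalIdeal R :=
    le_maximalIdeal (mt (Ideal.torsionOf_eq_top_iff (R := R) x).mp hx)
  let e := Ideal.quotTorsionOfEquivSpanSingleton R M x
  obtain ⟨f, hf⟩ := Module.Injective.extension_property R E _ _ (R ∙ x).subtype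
    (injective_subtype _) (ι ∘ₗ mapQ _ _ LinearMap.id hle ∘ₗ e.symm.toLinearMap)
  have he : e.symm ⟨x, mem_span_singleton_self x⟩ = Submodule.Quotient.mk 1 := by
    rw [LinearEquiv.symm_apply_eq, Ideal.quotTorsionOfEquivSpanSingleton_apply_mk, one_smul]
  refine ⟨f, ?_⟩
  have hfx := LinearMap.congr_fun hf ⟨x, mem_span_singleton_self x⟩
  simp only [LinearMap.comp_apply, subtype_apply, LinearEquiv.coe_coe, he, mapQ_apply,
    LinearMap.id_apply] at hfx
  rw [hfx]
  exact (map_ne_zero_iff ι hι).mpr one_ne_zero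

namespace Submodule

variable {R M : Type} [CommRing R] [AddCommGroup M] [Module R M] (E : Type) [AddCommGroup E]
  [Module R E]

/-- `Hom(M ⧸ Q, E)`, viewed inside `Hom(M, E)`. -/
def vanishingHoms (Q : Submodule R M) : Submodule R (M →ₗ[R] E) where
  carrier := {f | ∀ x ∈ Q, f x = 0}
  zero_mem' _ _ := rfl
  add_mem' hf hg x hx := by rw [LinearMap.add_apply, hf x hx, hg x hx, add_zero]
  smul_mem' r f hf x hx := by rw [LinearMap.smul_apply, hf x hx, smul_zero]

variable {E}

theorem comp_mkQ_mem_vanishingHoms (Q : Submodule R M) (g : (M ⧸ Q) →ₗ[R] E) :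
    g ∘ₗ Q.mkQ ∈ vanishingHoms E Q := fun x hx => by
  rw [LinearMap.comp_apply, mkQ_apply, (Quotient.mk_eq_zero Q).mpr hx, map_zero]

theorem vanishingHoms_antitone : Antitone (vanishingHoms E : Submodule R M → _) :=
  fun _ _ hNQ _ hf x hx => hf x (hNQ hx)

theorem vanishingHoms_ne_top [IsLocalRing R] (hE : IsResidueFieldInjectiveHull R E)
    {N : Submodule R M} (hN : N ≠ ⊥) : vanishingHoms E N ≠ ⊤ := by
  obtain ⟨x, hxN, hx⟩ := (Submodule.ne_bot_iff N).mp hN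
  obtain ⟨f, hf⟩ := hE.exists_apply_ne_zero hx
  exact fun htop => hf ((htop ▸ mem_top : f ∈ vanishingHoms E N) x hxN)

theorem vanishingHoms_ne_bot [IsLocalRing R] (hE : IsResidueFieldInjectiveHull R E)
    {Q : Submodule R M} (hQ : Q ≠ ⊤) : vanishingHoms E Q ≠ ⊥ := by
  obtain ⟨x, -, hxQ⟩ := SetLike.exists_of_lt (lt_top_iff_ne_top.mpr hQ)
  obtain ⟨g, hg⟩ := hE.exists_apply_ne_zero ((Quotient.mk_eq_zero Q).not.mpr hxQ)
  exact (Submodule.ne_bot_iff _).mpr ⟨g ∘ₗ Q.mkQ, comp_mkQ_mem_vanishingHoms Q g,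
    fun h => hg (LinearMap.congr_fun h x)⟩

theorem iSup_vanishingHoms_eq_top [Module.Injective R E] {ι : Type*} [Fintype ι]
    {Q : ι → Submodule R M} (hQ : ⨅ i, Q i = ⊥) : ⨆ i, vanishingHoms E (Q i) = ⊤ := by
  classical
  refine eq_top_iff.mpr fun f _ => ?_
  have hinj : Function.Injective (LinearMap.pi fun i => (Q i).mkQ) := by
    rw [← LinearMap.ker_eq_bot, LinearMap.ker_pi]
    simpa only [ker_mkQ] using hQ
  obtain ⟨h, rfl⟩ := Module.Injective.extension_property R E _ _ _ hinj f
  have hsum : h ∘ₗ LinearMap.pi (fun i => (Q i).mkQ) =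
      ∑ i, (h ∘ₗ LinearMap.single R _ i) ∘ₗ (Q i).mkQ := by
    ext x
    rw [LinearMap.sum_apply, LinearMap.comp_apply, ← LinearMap.sum_single_apply
      (v := (LinearMap.pi fun i => (Q i).mkQ) x), map_sum]
    rfl
  rw [hsum]
  exact sum_mem fun i _ => mem_iSup_of_mem i (comp_mkQ_mem_vanishingHoms _ _)

theorem IsPrimary.isSecondaryWith_vanishingHoms [IsLocalRing R]
    (hE : IsResidueFieldInjectiveHull R E) {Q : Submodule R M} (hQ : Q.IsPrimary) :
    IsSecondaryWith (vanishingHoms E Q) (Q.colon Set.univ).radical := by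
  have hcolon : Q.colon Set.univ ≤ (vanishingHoms E Q).annihilator := fun r hr =>
    mem_annihilator.mpr fun f hf => LinearMap.ext fun x => by
      rw [LinearMap.smul_apply, ← map_smul, hf _ (mem_colon.mp hr x trivial),
        LinearMap.zero_apply]
  refine .of_le_radical (vanishingHoms_ne_bot hE hQ.ne_top) (Ideal.radical_mono hcolon)
    fun r hr f hf => ?_
  have hinj : Function.Injective (LinearMap.lsmul R (M ⧸ Q) r) := by
    rw [← LinearMap.ker_eq_bot, eq_bot_iff]
    intro y hy
    obtain ⟨x, rfl⟩ := Q.mkQ_surjective y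
    rw [LinearMap.mem_ker, LinearMap.lsmul_apply, ← map_smul, mkQ_apply,
      Quotient.mk_eq_zero] at hy
    rw [mem_bot, mkQ_apply, Quotient.mk_eq_zero]
    exact (hQ.mem_or_mem hy).resolve_right hr
  have := hE.1
  obtain ⟨h, hh⟩ := Module.Injective.extension_property R E _ _ _ hinj
    (Q.liftQ f fun x hx => LinearMap.mem_ker.mpr (hf x hx))
  refine ⟨h ∘ₗ Q.mkQ, comp_mkQ_mem_vanishingHoms Q h, LinearMap.ext fun x => ?_⟩
  rw [LinearMap.smul_apply, LinearMap.comp_apply, ← map_smul, ← LinearMap.lsmul_apply,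
    ← LinearMap.comp_apply, hh, mkQ_apply, liftQ_apply]

end Submodule

/-- `Att_R(Hom_R(C, E(R/m))) = Ass_R(C)` for `C` finitely
generated over a Noetherian local ring. -/
theorem attachedPrimes_hom_injectiveHull (R : Type) [CommRing R]
    [IsNoetherianRing R] [IsLocalRing R] (C : Type) [AddCommGroup C] [Module R C]
    [Module.Finite R C] (E : Type) [AddCommGroup E] [Module R E]
    (hE : IsResidueFieldInjectiveHull R E) :
    attachedPrimes R (C →ₗ[R] E) = associatedPrimes R C := by
  have := hE.1
  obtain ⟨t, ht⟩ := (isLasker R C).exists_isMinimalPrimaryDecomposition ⊥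
  have hinf : ⨅ J : t, (J : Submodule R C) = ⊥ := by
    rw [← ht.inf_eq, Finset.inf_eq_iInf, iInf_subtype']
    rfl
  have hirr (J : t) : ⨆ K ∈ ({J}ᶜ : Set t), vanishingHoms E (K : Submodule R C) ≠ ⊤ := by
    refine ne_top_of_le_ne_top (vanishingHoms_ne_top hE (N := (t.erase J).inf id)
      fun h => ht.minimal J.2 (h ▸ bot_le)) (iSup₂_le fun K hK => vanishingHoms_antitone ?_)
    exact Finset.inf_le (Finset.mem_erase.mpr ⟨Subtype.val_injective.ne hK, K.2⟩)
  change _ = (⊥ : Submodule R C).associatedPrimes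
  rw [← ht.image_radical_eq_associated_primes, Set.image_eq_range]
  exact attachedPrimes_eq_range (iSup_vanishingHoms_eq_top hinf)
    (fun J => (ht.primary J.2).isSecondaryWith_vanishingHoms hE)
    (IsMinimalPrimaryDecomposition.injOn _ _ ht).injective hirr
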